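/- If D is a closed ∀⁺ type of system F, then D is a syntactical data type, i.e. D is both an input type and an output type. -/

import Mathlib

/-!
Common development: pure λ-calculus in de Bruijn notation, β-reduction,
weak head reduction, types of system F (with type constants), the typing
systems F, F₀ (F without (∀e)) and the simple system S, saturated sets and
interpretations, and the notions of input / output / data types, following
Farkh-Nour, "Les types de données syntaxiques du système F".
-/

namespace FarkhNour

/-- Pure λ-terms, in de Bruijn notation. -/
inductive Trm : Type
  | var : ℕ → Trm
  | app : Trm → Trm → Trm
  | lam : Trm → Trm

/-- Lift (shift) by `d` the free variables of a term, starting at index `k`. -/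
def liftTrm (d : ℕ) : ℕ → Trm → Trm
  | k, .var n => if n < k then .var n else .var (n + d)
  | k, .app a b => .app (liftTrm d k a) (liftTrm d k b)
  | k, .lam a => .lam (liftTrm d (k + 1) a)

/-- β-substitution `t[u/k]` (the binder for `k` is consumed: variables above `k`
are decremented), as used in the β-reduction rule. -/
def substTrm : Trm → ℕ → Trm → Trm
  | .var n, k, u => if n < k then .var n else if n = k then liftTrm k 0 u else .var (n - 1)
  | .app a b, k, u => .app (substTrm a k u) (substTrm b k u)
  | .lam a, k, u => .lam (substTrm a (k + 1) u)

/-- Named-style capture-avoiding substitution `t[u/x]` of the term `u` for the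
free variable `x` of `t` : the other free variables are left unchanged. -/
def replaceVar : Trm → ℕ → Trm → Trm
  | .var n, k, u => if n = k then u else .var n
  | .app a b, k, u => .app (replaceVar a k u) (replaceVar b k u)
  | .lam a, k, u => .lam (replaceVar a (k + 1) (liftTrm 1 0 u))

/-- Lifting of a parallel substitution under a binder. -/
def liftSub (σ : ℕ → Trm) : ℕ → Trm
  | 0 => .var 0
  | n + 1 => liftTrm 1 0 (σ n)

/-- Simultaneous (parallel) capture-avoiding substitution. -/
def msubst (σ : ℕ → Trm) : Trm → Trm
  | .var n => σ n
  | .app a b => .app (msubst σ a) (msubst σ b)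
  | .lam a => .lam (msubst (liftSub σ) a)

/-- One step of β-reduction. -/
inductive BetaStep : Trm → Trm → Prop
  | beta (t u : Trm) : BetaStep (.app (.lam t) u) (substTrm t 0 u)
  | appL {t t' : Trm} (u : Trm) : BetaStep t t' → BetaStep (.app t u) (.app t' u)
  | appR (t : Trm) {u u' : Trm} : BetaStep u u' → BetaStep (.app t u) (.app t u')
  | lam {t t' : Trm} : BetaStep t t' → BetaStep (.lam t) (.lam t')

/-- Many-step β-reduction `t →β t'`. -/
def BetaRed : Trm → Trm → Prop := Relation.ReflTransGen BetaStep

/-- β-equivalence `t ≃β t'`. -/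
def BetaEq : Trm → Trm → Prop := Relation.EqvGen BetaStep

/-- A term is normal iff no β-reduction step applies to it. -/
def IsNormal (t : Trm) : Prop := ∀ u, ¬ BetaStep t u

/-- `FreeIn k t` : the variable (de Bruijn index) `k` occurs free in `t`. -/
def FreeIn : ℕ → Trm → Prop
  | k, .var n => n = k
  | k, .app a b => FreeIn k a ∨ FreeIn k b
  | k, .lam a => FreeIn (k + 1) a

/-- A closed term. -/
def TrmClosed (t : Trm) : Prop := ∀ k, ¬ FreeIn k t

/-- One step of weak head reduction. -/
inductive WHStep : Trm → Trm → Prop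
  | beta (t u : Trm) : WHStep (.app (.lam t) u) (substTrm t 0 u)
  | app {t t' : Trm} (u : Trm) : WHStep t t' → WHStep (.app t u) (.app t' u)

/-- Weak head reduction `t ≻_f t'`. -/
def WHRed : Trm → Trm → Prop := Relation.ReflTransGen WHStep

/-- Types of system F, in de Bruijn notation, with type constants
(the constant `0` is the distinguished constant `O`, the constant `1` is `⊥`). -/
inductive Ty : Type
  | var : ℕ → Ty
  | const : ℕ → Ty
  | arr : Ty → Ty → Ty
  | all : Ty → Ty

/-- The distinguished type constant `O`. -/
def tyO : Ty := .const 0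

/-- The distinguished type constant `⊥`. -/
def tyBot : Ty := .const 1

/-- Lift (shift) by `d` the free type variables, starting at index `k`. -/
def liftTy (d : ℕ) : ℕ → Ty → Ty
  | k, .var n => if n < k then .var n else .var (n + d)
  | _, .const c => .const c
  | k, .arr a b => .arr (liftTy d k a) (liftTy d k b)
  | k, .all a => .all (liftTy d (k + 1) a)

/-- Capture-avoiding type substitution `A[G/k]`. -/
def substTy : Ty → ℕ → Ty → Ty
  | .var n, k, G => if n < k then .var n else if n = k then liftTy k 0 G else .var (n - 1)
  | .const c, _, _ => .const c
  | .arr a b, k, G => .arr (substTy a k G) (substTy b k G)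
  | .all a, k, G => .all (substTy a (k + 1) G)

/-- `TyFreeIn k A` : the type variable `k` occurs free in `A`. -/
def TyFreeIn : ℕ → Ty → Prop
  | k, .var n => n = k
  | _, .const _ => False
  | k, .arr a b => TyFreeIn k a ∨ TyFreeIn k b
  | k, .all a => TyFreeIn (k + 1) a

/-- Boolean version of `TyFreeIn`. -/
def tyFreeInB : ℕ → Ty → Bool
  | k, .var n => n == k
  | _, .const _ => false
  | k, .arr a b => tyFreeInB k a || tyFreeInB k b
  | k, .all a => tyFreeInB (k + 1) a

/-- A closed type. -/
def TyClosed (A : Ty) : Prop := ∀ k, ¬ TyFreeIn k A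

/-- `ContainsConst c A` : the type constant `c` occurs in `A`. -/
def ContainsConst : ℕ → Ty → Prop
  | _, .var _ => False
  | c, .const c' => c' = c
  | c, .arr a b => ContainsConst c a ∨ ContainsConst c b
  | c, .all a => ContainsConst c a

/-- The typing judgment `Γ ⊢_F t : A` of system F, with rules
(ax), (→i), (→e), (∀i), (∀e). -/
inductive TypF : List Ty → Trm → Ty → Prop
  | var (Γ : List Ty) (n : ℕ) (A : Ty) : Γ[n]? = some A → TypF Γ (.var n) A
  | abs {Γ : List Ty} {t : Trm} {B C : Ty} :
      TypF (B :: Γ) t C → TypF Γ (.lam t) (.arr B C)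
  | app {Γ : List Ty} {u v : Trm} {B C : Ty} :
      TypF Γ u (.arr B C) → TypF Γ v B → TypF Γ (.app u v) C
  | allI {Γ : List Ty} {t : Trm} {A : Ty} :
      TypF (Γ.map (liftTy 1 0)) t A → TypF Γ t (.all A)
  | allE {Γ : List Ty} {t : Trm} {A : Ty} (G : Ty) :
      TypF Γ t (.all A) → TypF Γ t (substTy A 0 G)

/-- The typing judgment `Γ ⊢_{F₀} t : A` of system F₀, i.e. system F
without the rule (∀e). -/
inductive TypF0 : List Ty → Trm → Ty → Prop
  | var (Γ : List Ty) (n : ℕ) (A : Ty) : Γ[n]? = some A → TypF0 Γ (.var n) A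
  | abs {Γ : List Ty} {t : Trm} {B C : Ty} :
      TypF0 (B :: Γ) t C → TypF0 Γ (.lam t) (.arr B C)
  | app {Γ : List Ty} {u v : Trm} {B C : Ty} :
      TypF0 Γ u (.arr B C) → TypF0 Γ v B → TypF0 Γ (.app u v) C
  | allI {Γ : List Ty} {t : Trm} {A : Ty} :
      TypF0 (Γ.map (liftTy 1 0)) t A → TypF0 Γ t (.all A)

/-- The typing judgment `Γ ⊢_S t : A` of the simple type system S,
with rules (ax), (→i), (→e) only. -/
inductive TypS : List Ty → Trm → Ty → Prop
  | var (Γ : List Ty) (n : ℕ) (A : Ty) : Γ[n]? = some A → TypS Γ (.var n) A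
  | abs {Γ : List Ty} {t : Trm} {B C : Ty} :
      TypS (B :: Γ) t C → TypS Γ (.lam t) (.arr B C)
  | app {Γ : List Ty} {u v : Trm} {B C : Ty} :
      TypS Γ u (.arr B C) → TypS Γ v B → TypS Γ (.app u v) C

/-- Quantifier-free types (types of the simple type system S). -/
def QFree : Ty → Prop
  | .var _ => True
  | .const _ => True
  | .arr a b => QFree a ∧ QFree b
  | .all _ => False

/-- An input type : a closed type all of whose normal inhabitants are
typable in system F₀. -/
def IsInputType (E : Ty) : Prop :=
  TyClosed E ∧ ∀ t : Trm, IsNormal t → TypF [] t E → TypF0 [] t E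

/-- An output type : a closed type `S` not containing the constant `O` such
that for every normal term `t`, if `α : O ⊢_F t : S` then `α ∉ Fv(t)`. -/
def IsOutputType (S : Ty) : Prop :=
  TyClosed S ∧ ¬ ContainsConst 0 S ∧
    ∀ t : Trm, IsNormal t → TypF [tyO] t S → ¬ FreeIn 0 t

/-- A syntactical data type : a closed type which is both input and output. -/
def IsSyntacticalDataType (D : Ty) : Prop := IsInputType D ∧ IsOutputType D

mutual
  /-- The ∀⁺ types (positive quantifiers). -/
  inductive PosTy : Ty → Prop
    | var (n : ℕ) : PosTy (.var n)
    | arr {B A : Ty} : NegTy B → PosTy A → PosTy (.arr B A)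
    | all {A : Ty} : PosTy A → TyFreeIn 0 A → PosTy (.all A)
  /-- The ∀⁻ types (negative quantifiers). -/
  inductive NegTy : Ty → Prop
    | var (n : ℕ) : NegTy (.var n)
    | arr {B A : Ty} : PosTy B → NegTy A → NegTy (.arr B A)
end

/-- `EndsInConst c A` : the type `A` ends in the type constant `c`. -/
inductive EndsInConst : ℕ → Ty → Prop
  | base (c : ℕ) : EndsInConst c (.const c)
  | arr {c : ℕ} {A : Ty} (B : Ty) : EndsInConst c A → EndsInConst c (.arr B A)
  | all {c : ℕ} {A : Ty} : EndsInConst c A → EndsInConst c (.all A)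

/-- `EndsInVar k A` : the type `A` ends in the type variable `k`
(crossing a quantifier ∀X with X ≠ the variable is allowed). -/
inductive EndsInVar : ℕ → Ty → Prop
  | base (k : ℕ) : EndsInVar k (.var k)
  | arr {k : ℕ} {A : Ty} (B : Ty) : EndsInVar k A → EndsInVar k (.arr B A)
  | all {k : ℕ} {A : Ty} : EndsInVar (k + 1) A → EndsInVar k (.all A)

/-- The side condition of the restricted rule (∀e)_F : the body `A` of `∀X A`
(the variable X having index `k`) is of the form
`∀X₀(A₁ → ∀X₁(A₂ → … → ∀X_{n-1}(A_n → ∀X_n Y)…))` with `Y = X` or one of the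
`A_i` ending in `X`. -/
inductive FFForm : ℕ → Ty → Prop
  | base (k : ℕ) : FFForm k (.var k)
  | all {k : ℕ} {A : Ty} : FFForm (k + 1) A → FFForm k (.all A)
  | arrTail {k : ℕ} {C : Ty} (B : Ty) : FFForm k C → FFForm k (.arr B C)
  | arrHit {k : ℕ} {B C : Ty} : EndsInVar k B → (∃ j, EndsInVar j C) →
      FFForm k (.arr B C)

/-- The typing judgment of system F_F : system F where the rule (∀e) is
replaced by the restricted rule (∀e)_F. -/
inductive TypFF : List Ty → Trm → Ty → Prop
  | var (Γ : List Ty) (n : ℕ) (A : Ty) : Γ[n]? = some A → TypFF Γ (.var n) A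
  | abs {Γ : List Ty} {t : Trm} {B C : Ty} :
      TypFF (B :: Γ) t C → TypFF Γ (.lam t) (.arr B C)
  | app {Γ : List Ty} {u v : Trm} {B C : Ty} :
      TypFF Γ u (.arr B C) → TypFF Γ v B → TypFF Γ (.app u v) C
  | allI {Γ : List Ty} {t : Trm} {A : Ty} :
      TypFF (Γ.map (liftTy 1 0)) t A → TypFF Γ t (.all A)
  | allE {Γ : List Ty} {t : Trm} {A : Ty} (G : Ty) :
      FFForm 0 A → TypFF Γ t (.all A) → TypFF Γ t (substTy A 0 G)

/-- An output type of system F_F. -/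
def IsOutputTypeFF (S : Ty) : Prop :=
  TyClosed S ∧ ¬ ContainsConst 0 S ∧
    ∀ t : Trm, IsNormal t → TypFF [tyO] t S → ¬ FreeIn 0 t

/-- Saturated sets of λ-terms. -/
def Saturated (G : Set Trm) : Prop := ∀ t u : Trm, WHRed t u → u ∈ G → t ∈ G

/-- `G → G'` on sets of λ-terms. -/
def SetArr (G G' : Set Trm) : Set Trm := {u : Trm | ∀ t ∈ G, Trm.app u t ∈ G'}

/-- Extension of an interpretation by a set for the (de Bruijn) variable 0. -/
def consEnv (G : Set Trm) (I : ℕ → Set Trm) : ℕ → Set Trm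
  | 0 => G
  | n + 1 => I n

/-- The value `|A|_I` of a type in an interpretation (`C` interprets the
type constants, `I` the type variables). -/
def TyVal (C : ℕ → Set Trm) : Ty → (ℕ → Set Trm) → Set Trm
  | .var n, I => I n
  | .const c, _ => C c
  | .arr a b, I => SetArr (TyVal C a I) (TyVal C b I)
  | .all a, I => {t : Trm | ∀ G : Set Trm, Saturated G → t ∈ TyVal C a (consEnv G I)}

/-- `|A|` : the intersection of the values of `A` under all interpretations
by saturated sets. -/
def TyGlobal (A : Ty) : Set Trm :=
  {t : Trm | ∀ C I : ℕ → Set Trm, (∀ c, Saturated (C c)) → (∀ n, Saturated (I n)) →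
    t ∈ TyVal C A I}

/-- A data type in Krivine's sense : a closed type `A` with `|A| ≠ ∅` such that
every term of `|A|` β-reduces to a closed term. -/
def IsDataType (A : Ty) : Prop :=
  TyClosed A ∧ TyGlobal A ≠ ∅ ∧
    ∀ t ∈ TyGlobal A, ∃ t' : Trm, BetaRed t t' ∧ TrmClosed t'

/-- The product type `A ∧ B = ∀X((A → (B → X)) → X)` (X fresh). -/
def tyAnd (A B : Ty) : Ty :=
  .all (.arr (.arr (liftTy 1 0 A) (.arr (liftTy 1 0 B) (.var 0))) (.var 0))

/-- The disjoint sum type `A ∨ B = ∀X((A → X) → ((B → X) → X))` (X fresh). -/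
def tyOr (A B : Ty) : Ty :=
  .all (.arr (.arr (liftTy 1 0 A) (.var 0))
    (.arr (.arr (liftTy 1 0 B) (.var 0)) (.var 0)))

/-- The type `LA = ∀X(X → ((A → (X → X)) → X))` of lists of objects of `A`. -/
def tyList (A : Ty) : Ty :=
  .all (.arr (.var 0)
    (.arr (.arr (liftTy 1 0 A) (.arr (.var 0) (.var 0))) (.var 0)))

/-- Negation `¬A = A → ⊥`. -/
def tyNeg (A : Ty) : Ty := .arr A tyBot

/-- The Gödel translation `A*` : every atomic subformula `R` is replaced
by `¬R`. -/
def godel : Ty → Ty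
  | .var n => .arr (.var n) tyBot
  | .const c => .arr (.const c) tyBot
  | .arr a b => .arr (godel a) (godel b)
  | .all a => .all (godel a)

/-- `T` is a storage operator for the pair of types `(E, S)`. -/
def IsStorageOpPair (T : Trm) (E S : Ty) : Prop :=
  TrmClosed T ∧
    ∀ t : Trm, TypF [] t E →
      ∃ τ τ' : Trm, BetaEq τ τ' ∧ TypF [] τ' S ∧
        ∀ θ : Trm, BetaEq θ t →
          ∀ f : ℕ, ¬ FreeIn f θ → ¬ FreeIn f τ →
            ∃ σ : ℕ → Trm,
              WHRed (.app (.app T θ) (.var f)) (.app (.var f) (msubst σ τ))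

/-- `T` is a storage operator for the type `D`. -/
def IsStorageOp (T : Trm) (D : Ty) : Prop := IsStorageOpPair T D D

/-- The term `λx₁…λxₙ.α` (n-fold abstraction over the free variable `α`). -/
def nlam (n a : ℕ) : Trm := Trm.lam^[n] (Trm.var (a + n))

/-- The term `p_n = λx₁…λxₙλx.x`. -/
def pTrm (n : ℕ) : Trm := Trm.lam^[n] (Trm.lam (Trm.var 0))

/-- `B₁ → … → B_n → A`. -/
def mkArr (Bs : List Ty) (A : Ty) : Ty := Bs.foldr Ty.arr A

/-- The length `Lg(E)` of a type : the number of occurrences of `→` in it. -/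
def Lg : Ty → ℕ
  | .var _ => 0
  | .const _ => 0
  | .arr a b => Lg a + Lg b + 1
  | .all a => Lg a

/-- `SubtypeOf A E` : `A` is a subtype (subformula) of `E`. -/
inductive SubtypeOf : Ty → Ty → Prop
  | refl (A : Ty) : SubtypeOf A A
  | arrL {A B C : Ty} : SubtypeOf A B → SubtypeOf A (.arr B C)
  | arrR {A B C : Ty} : SubtypeOf A C → SubtypeOf A (.arr B C)
  | all {A B : Ty} : SubtypeOf A B → SubtypeOf A (.all B)

/-- `InAppPos k t` : the variable `k` occurs in application (function)
position in `t`, i.e. some subterm of `t` is of the form `(k)u`. -/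
def InAppPos : ℕ → Trm → Prop
  | _, .var _ => False
  | k, .app u v => u = .var k ∨ InAppPos k u ∨ InAppPos k v
  | k, .lam u => InAppPos (k + 1) u

/-- The simple translation `A^s` : `X^s = X`, `(B → C)^s = B^s → C^s`,
`(∀X B)^s = B^s` (the variables freed by erasing the quantifiers are collapsed
onto the type variable `0`). `d` counts the erased quantifiers. -/
def eraseTyAux : ℕ → Ty → Ty
  | d, .var n => .var (n - d)
  | _, .const c => .const c
  | d, .arr a b => .arr (eraseTyAux d a) (eraseTyAux d b)
  | d, .all a => eraseTyAux (d + 1) a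

/-- The simple translation `A^s`. -/
def eraseTy : Ty → Ty := eraseTyAux 0

/-- The identity term `λx.x`. -/
def idTrm : Trm := .lam (.var 0)

/-- The boolean `𝟙 = λxλy.x`. -/
def oneTrm : Trm := .lam (.lam (.var 1))

/-- The pair of λ-terms `(T_F, T'_F)` associated with a type `F` (the
distinguished variable `X` having de Bruijn index `k`; the term variable `α`
is the free term variable `0`):
`T_F = T'_F = λx.x` if `X ∉ Fv(F)`;
`T_X = λxλβλg.(g)xα`, `T'_X = λx.(x)α𝟙`;
`T_{C→D} = λxλy.(T_D)(x)(T'_C)y`, `T'_{C→D} = λxλy.(T'_D)(x)(T_C)y`;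
`T_{∀Y B} = λx.(T_B)x`, `T'_{∀Y B} = λx.(T'_B)x`. -/
def TTpair : ℕ → Ty → Trm × Trm
  | k, .var n =>
      if n = k then
        (.lam (.lam (.lam (.app (.app (.var 0) (.var 2)) (.var 3)))),
         .lam (.app (.app (.var 0) (.var 1)) oneTrm))
      else (idTrm, idTrm)
  | _, .const _ => (idTrm, idTrm)
  | k, .arr C D =>
      if tyFreeInB k (.arr C D) then
        (.lam (.lam (.app (liftTrm 2 0 (TTpair k D).1)
            (.app (.var 1) (.app (liftTrm 2 0 (TTpair k C).2) (.var 0))))),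
         .lam (.lam (.app (liftTrm 2 0 (TTpair k D).2)
            (.app (.var 1) (.app (liftTrm 2 0 (TTpair k C).1) (.var 0))))))
      else (idTrm, idTrm)
  | k, .all B =>
      if tyFreeInB k (.all B) then
        (.lam (.app (liftTrm 1 0 (TTpair (k + 1) B).1) (.var 0)),
         .lam (.app (liftTrm 1 0 (TTpair (k + 1) B).2) (.var 0)))
      else (idTrm, idTrm)


/-!
A typing of a normal term in system F can be normalized so that (∀e) is applied only inside
elimination chains `x u₁ … uₙ` headed by a variable. In a context made of ∀⁻ types and of the
constant `O`, a chain headed by a ∀⁻ variable keeps a ∀⁻ type, which never starts with a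
quantifier, so (∀e) never fires in it, and its arguments sit at ∀⁺ types; a chain headed by a
variable of type `O` cannot be extended at all and has type `O`, which is neither ∀⁺ nor ∀⁻.
Hence a normal term of ∀⁺ type is typed without (∀e), and a variable of type `O` does not
occur in it.
-/

theorem liftTy_liftTy (i j : ℕ) (G : Ty) {p q : ℕ} (hpq : p ≤ q) (hq : q ≤ i + p) :
    liftTy j q (liftTy i p G) = liftTy (i + j) p G := by
  induction G generalizing p q with
  | var n => grind [liftTy]
  | const c => rfl
  | arr a b iha ihb => simp only [liftTy, iha hpq hq, ihb hpq hq]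
  | all a ih => simp only [liftTy, ih (Nat.succ_le_succ hpq) (by omega)]

theorem substTy_liftTy_one (G B : Ty) (k : ℕ) : substTy (liftTy 1 k B) k G = B := by
  induction B generalizing k with
  | var n => grind [liftTy, substTy]
  | const c => rfl
  | arr a b iha ihb => simp only [liftTy, substTy, iha, ihb]
  | all a ih => simp only [liftTy, substTy, ih]

theorem substTy_liftTy_succ (k : ℕ) (X G : Ty) {m j : ℕ} (hmj : m ≤ j) (hj : j ≤ k + m) :
    substTy (liftTy (k + 1) m G) j X = liftTy k m G := by
  induction G generalizing m j with
  | var n => grind [liftTy, substTy]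
  | const c => rfl
  | arr a b iha ihb => simp only [liftTy, substTy, iha hmj hj, ihb hmj hj]
  | all a ih => simp only [liftTy, substTy, ih (Nat.succ_le_succ hmj) (by omega)]

theorem substTy_liftTy (G G' : Ty) {j m k : ℕ} (h : j + m ≤ k) :
    substTy (liftTy j m G') k G = liftTy j m (substTy G' (k - j) G) := by
  induction G' generalizing m k with
  | var n => grind [liftTy, substTy, liftTy_liftTy]
  | const c => rfl
  | arr a b iha ihb => simp only [liftTy, substTy, iha h, ihb h]
  | all a ih =>
    simp only [liftTy, substTy]
    rw [ih (by omega : j + (m + 1) ≤ k + 1), show k + 1 - j = k - j + 1 by omega]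

theorem substTy_substTy (G G' A : Ty) {j k : ℕ} (h : j ≤ k) :
    substTy (substTy A j G') k G = substTy (substTy A (k + 1) G) j (substTy G' (k - j) G) := by
  induction A generalizing j k with
  | var n => grind [substTy, substTy_liftTy, substTy_liftTy_succ]
  | const c => rfl
  | arr a b iha ihb => simp only [substTy, iha h, ihb h]
  | all a ih =>
    simp only [substTy]
    rw [ih (Nat.succ_le_succ h), Nat.succ_sub_succ]

/-- Normal derivations of system F; with `true`, the elimination chains `x u₁ … uₙ`, the only
place where (∀e) is allowed. -/
inductive NormTypF : Bool → List Ty → Trm → Ty → Prop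
  | var (Γ : List Ty) (n : ℕ) (A : Ty) : Γ[n]? = some A → NormTypF true Γ (.var n) A
  | app {Γ : List Ty} {u v : Trm} {B C : Ty} :
      NormTypF true Γ u (.arr B C) → NormTypF false Γ v B → NormTypF true Γ (.app u v) C
  | allE {Γ : List Ty} {t : Trm} {A : Ty} (G : Ty) :
      NormTypF true Γ t (.all A) → NormTypF true Γ t (substTy A 0 G)
  | elim {Γ : List Ty} {t : Trm} {A : Ty} : NormTypF true Γ t A → NormTypF false Γ t A
  | abs {Γ : List Ty} {t : Trm} {B C : Ty} :
      NormTypF false (B :: Γ) t C → NormTypF false Γ (.lam t) (.arr B C)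
  | allI {Γ : List Ty} {t : Trm} {A : Ty} :
      NormTypF false (Γ.map (liftTy 1 0)) t A → NormTypF false Γ t (.all A)

namespace NormTypF

theorem subst {b : Bool} {Γ : List Ty} {t : Trm} {A : Ty} (G : Ty) (h : NormTypF b Γ t A)
    (k : ℕ) : NormTypF b (Γ.map (substTy · k G)) t (substTy A k G) := by
  induction h generalizing k with
  | var Γ n A hn => exact var _ n _ (by simp [hn])
  | app _ _ ihu ihv => exact app (ihu k) (ihv k)
  | allE G' _ ih =>
    rw [substTy_substTy G G' _ (Nat.zero_le k)]
    exact allE _ (ih k)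
  | elim _ ih => exact elim (ih k)
  | abs _ ih => exact abs (ih k)
  | allI _ ih =>
    refine allI ?_
    have hcomm : (substTy · (k + 1) G) ∘ liftTy 1 0 =
        liftTy 1 0 ∘ (substTy · k G) := by
      funext T
      simpa using substTy_liftTy G T (by omega : 1 + 0 ≤ k + 1)
    simpa only [List.map_map, hcomm] using ih (k + 1)

theorem instantiate {Γ : List Ty} {t : Trm} {A : Ty} (G : Ty)
    (h : NormTypF false (Γ.map (liftTy 1 0)) t A) :
    NormTypF false Γ t (substTy A 0 G) := by
  have hcancel : (substTy · 0 G) ∘ liftTy 1 0 = id :=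
    funext (substTy_liftTy_one G · 0)
  simpa only [List.map_map, hcancel, List.map_id] using h.subst G 0

theorem elim_of_arr {Γ : List Ty} {u : Trm} {B C : Ty} (h : NormTypF false Γ u (.arr B C))
    (hu : ∀ w, u ≠ .lam w) : NormTypF true Γ u (.arr B C) := by
  cases h with
  | elim h => exact h
  | abs _ => exact absurd rfl (hu _)

theorem allE_normal {Γ : List Ty} {t : Trm} {A : Ty} (G : Ty)
    (h : NormTypF false Γ t (.all A)) : NormTypF false Γ t (substTy A 0 G) := by
  cases h with
  | elim h => exact elim (allE G h)
  | allI h => exact instantiate G h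

end NormTypF

theorem IsNormal.of_lam {t : Trm} (h : IsNormal (.lam t)) : IsNormal t :=
  fun _ ht => h _ (.lam ht)

theorem IsNormal.of_app {u v : Trm} (h : IsNormal (.app u v)) :
    IsNormal u ∧ IsNormal v ∧ ∀ w, u ≠ .lam w := by
  refine ⟨fun _ hu => h _ (.appL v hu), fun _ hv => h _ (.appR u hv), ?_⟩
  rintro w rfl
  exact h _ (.beta w v)

theorem TypF.normTypF {Γ : List Ty} {t : Trm} {A : Ty} (h : TypF Γ t A) (hn : IsNormal t) :
    NormTypF false Γ t A := by
  induction h with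
  | var Γ n A hΓ => exact .elim (.var Γ n A hΓ)
  | abs _ ih => exact .abs (ih hn.of_lam)
  | app _ _ ihu ihv =>
    obtain ⟨hu, hv, hne⟩ := hn.of_app
    exact .elim (.app ((ihu hu).elim_of_arr hne) (ihv hv))
  | allI _ ih => exact .allI (ih hn)
  | allE G _ ih => exact (ih hn).allE_normal G

theorem tyFreeIn_liftTy (d : ℕ) {A : Ty} {j k : ℕ} (hjk : j < k) (h : TyFreeIn j A) :
    TyFreeIn j (liftTy d k A) := by
  induction A generalizing j k with
  | var n => cases h; simp [liftTy, hjk, TyFreeIn]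
  | const c => exact h.elim
  | arr a b iha ihb => exact h.imp (iha hjk) (ihb hjk)
  | all a ih => exact ih (Nat.succ_lt_succ hjk) h

theorem posTy_and_negTy_liftTy (d : ℕ) (A : Ty) (k : ℕ) :
    (PosTy A → PosTy (liftTy d k A)) ∧ (NegTy A → NegTy (liftTy d k A)) := by
  induction A generalizing k with
  | var n => constructor <;> intro _ <;> simp only [liftTy] <;> split_ifs <;> constructor
  | const c => constructor <;> nofun
  | arr a b iha ihb =>
    constructor
    · intro h
      cases h with
      | arr hB hA => exact .arr ((iha k).2 hB) ((ihb k).1 hA)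
    · intro h
      cases h with
      | arr hB hA => exact .arr ((iha k).1 hB) ((ihb k).2 hA)
  | all a ih =>
    refine ⟨fun h => ?_, nofun⟩
    cases h with
    | all hA hfree => exact .all ((ih (k + 1)).1 hA) (tyFreeIn_liftTy d (Nat.succ_pos k) hfree)

theorem not_containsConst_of_posTy_or_negTy (c : ℕ) {A : Ty} (h : PosTy A ∨ NegTy A) :
    ¬ ContainsConst c A := by
  induction A with
  | var n => exact id
  | const c' => rcases h with h | h <;> cases h
  | arr a b iha ihb =>
    rcases h with h | h <;> cases h with
    | arr hB hA => rintro (hc | hc); exacts [iha (by tauto) hc, ihb (by tauto) hc]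
  | all a ih =>
    obtain h | h := h
    · cases h with
      | all hA _ => exact ih (.inl hA)
    · cases h

def NegCtx (Γ : List Ty) : Prop := ∀ B ∈ Γ, NegTy B ∨ B = tyO

theorem NegCtx.cons {B : Ty} {Γ : List Ty} (hB : NegTy B) (hΓ : NegCtx Γ) : NegCtx (B :: Γ) := by
  simpa [NegCtx, hB] using hΓ

theorem NegCtx.map_liftTy {Γ : List Ty} (hΓ : NegCtx Γ) : NegCtx (Γ.map (liftTy 1 0)) := by
  simp only [NegCtx, List.mem_map, forall_exists_index, and_imp, forall_apply_eq_imp_iff₂]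
  intro B hB
  rcases hΓ B hB with hneg | rfl
  · exact .inl ((posTy_and_negTy_liftTy 1 B 0).2 hneg)
  · exact .inr rfl

def AvoidsO (Γ : List Ty) (t : Trm) : Prop := ∀ i, Γ[i]? = some tyO → ¬ FreeIn i t

theorem AvoidsO.app {Γ : List Ty} {u v : Trm} (hu : AvoidsO Γ u) (hv : AvoidsO Γ v) :
    AvoidsO Γ (.app u v) :=
  fun i hi hfree => hfree.elim (hu i hi) (hv i hi)

theorem AvoidsO.lam {B : Ty} {Γ : List Ty} {t : Trm} (h : AvoidsO (B :: Γ) t) :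
    AvoidsO Γ (.lam t) :=
  fun i hi => h (i + 1) hi

theorem AvoidsO.of_map_liftTy {Γ : List Ty} {t : Trm} (h : AvoidsO (Γ.map (liftTy 1 0)) t) :
    AvoidsO Γ t :=
  fun i hi => h i (by simp [hi, tyO, liftTy])

/-- The invariant of normal derivations in a `NegCtx`, for elimination chains (`true`) and in
general (`false`). -/
def F0Inv : Bool → List Ty → Trm → Ty → Prop
  | true, Γ, t, A => TypF0 Γ t A ∧ (NegTy A ∧ AvoidsO Γ t ∨ A = tyO)
  | false, Γ, t, A => PosTy A → TypF0 Γ t A ∧ AvoidsO Γ t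

theorem f0Inv_var {Γ : List Ty} {n : ℕ} {A : Ty} (hΓ : NegCtx Γ) (hn : Γ[n]? = some A) :
    F0Inv true Γ (.var n) A := by
  refine ⟨.var Γ n A hn, ?_⟩
  rcases hΓ A (List.mem_of_getElem? hn) with hA | hA
  · refine .inl ⟨hA, fun i hi hfree => ?_⟩
    obtain rfl : n = i := hfree
    obtain rfl : A = tyO := Option.some_injective _ (hn.symm.trans hi)
    cases hA
  · exact .inr hA

theorem f0Inv_app {Γ : List Ty} {u v : Trm} {B C : Ty} (hu : F0Inv true Γ u (.arr B C))
    (hv : F0Inv false Γ v B) : F0Inv true Γ (.app u v) C := by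
  obtain ⟨hu0, ⟨hneg, huO⟩ | hO⟩ := hu
  · cases hneg with
    | arr hB hC =>
      obtain ⟨hv0, hvO⟩ := hv hB
      exact ⟨.app hu0 hv0, .inl ⟨hC, huO.app hvO⟩⟩
  · nomatch hO

theorem not_f0Inv_all {Γ : List Ty} {t : Trm} {A : Ty} : ¬ F0Inv true Γ t (.all A) := by
  rintro ⟨-, ⟨hneg, -⟩ | hO⟩
  · cases hneg
  · cases hO

theorem f0Inv_false_of_true {Γ : List Ty} {t : Trm} {A : Ty} (h : F0Inv true Γ t A) :
    F0Inv false Γ t A := by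
  intro hA
  obtain ⟨h0, ⟨-, hO⟩ | rfl⟩ := h
  · exact ⟨h0, hO⟩
  · cases hA

theorem NormTypF.f0Inv {b : Bool} {Γ : List Ty} {t : Trm} {A : Ty} (h : NormTypF b Γ t A)
    (hΓ : NegCtx Γ) : F0Inv b Γ t A := by
  induction h with
  | var Γ n A hn => exact f0Inv_var hΓ hn
  | app _ _ ihu ihv => exact f0Inv_app (ihu hΓ) (ihv hΓ)
  | allE G _ ih => exact absurd (ih hΓ) not_f0Inv_all
  | elim _ ih => exact f0Inv_false_of_true (ih hΓ)
  | abs _ ih =>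
    intro hA
    cases hA with
    | arr hB hC =>
      obtain ⟨h0, hO⟩ := ih (hΓ.cons hB) hC
      exact ⟨.abs h0, hO.lam⟩
  | allI _ ih =>
    intro hA
    cases hA with
    | all hA _ =>
      obtain ⟨h0, hO⟩ := ih hΓ.map_liftTy hA
      exact ⟨.allI h0, hO.of_map_liftTy⟩

theorem TypF.typF0_and_avoidsO {Γ : List Ty} {t : Trm} {A : Ty} (h : TypF Γ t A)
    (hn : IsNormal t) (hΓ : NegCtx Γ) (hA : PosTy A) : TypF0 Γ t A ∧ AvoidsO Γ t :=
  (h.normTypF hn).f0Inv hΓ hA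

/-- a closed ∀⁺ type of system F is a syntactical data type,
i.e. both an input type and an output type. -/
theorem pos_type_is_syntactical_data_type (D : Ty) (hD : PosTy D)
    (hC : TyClosed D) : IsSyntacticalDataType D := by
  have hnil : NegCtx [] := by simp [NegCtx]
  have hO : NegCtx [tyO] := by simp [NegCtx]
  refine ⟨⟨hC, fun t hn ht => (ht.typF0_and_avoidsO hn hnil hD).1⟩,
    hC, not_containsConst_of_posTy_or_negTy 0 (.inl hD), fun t hn ht => ?_⟩
  exact (ht.typF0_and_avoidsO hn hO hD).2 0 rfl

end FarkhNour
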